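/- Let f : ℝ^d → ℝ be three times continuously differentiable and suppose there are constants G_min, L, ρ > 0 such that for all θ, x, y ∈ ℝ^d: ‖∇f(θ)‖₂ ≥ G_min, ‖∇²f(θ)‖ ≤ L (operator norm), and ‖∇²f(x) − ∇²f(y)‖ ≤ ρ‖x − y‖₂. Let J(θ) denote the derivative of the normalized gradient map θ ↦ ∇f(θ)/‖∇f(θ)‖₂. Then J is Lipschitz continuous in operator norm with Lipschitz constant (3L² + ρ·G_min)/G_min², i.e., ‖J(x) − J(y)‖ ≤ ((3L² + ρ·G_min)/G_min²)·‖x − y‖₂ for all x, y. -/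

import Mathlib

/-!
Write `g = ∇f` and `h = g / ‖g‖`. Then `J = ‖g‖⁻¹ • (I - h hᵀ) ∘ ∇²f` is a product of three
factors, each bounded and Lipschitz: the scalar `‖g‖⁻¹` (bound `1/G`, constant `L/G²`), the
projection `I - h hᵀ` (bound `1`, constant `2L/G`, because `h` is `L/G`-Lipschitz), and the
Hessian (bound `L`, constant `ρ`). The product rule for Lipschitz maps gives
`L²/G² + 2L²/G² + ρ/G = (3L² + ρG)/G²`.
-/

open scoped RealInnerProductSpace
open NormedSpace (normalize)

lemma abs_inv_norm_sub_inv_norm_le {V : Type*} [SeminormedAddCommGroup V] {u v : V} {G : ℝ}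
    (hG : 0 < G) (hu : G ≤ ‖u‖) (hv : G ≤ ‖v‖) : |‖u‖⁻¹ - ‖v‖⁻¹| ≤ ‖u - v‖ / G ^ 2 := by
  have hu0 : 0 < ‖u‖ := hG.trans_le hu
  have hv0 : 0 < ‖v‖ := hG.trans_le hv
  rw [inv_sub_inv hu0.ne' hv0.ne', abs_div, abs_of_pos (mul_pos hu0 hv0), abs_sub_comm, sq]
  exact div_le_div₀ (norm_nonneg _) (abs_norm_sub_norm_le u v) (by positivity)
    (mul_le_mul hu hv hG.le hu0.le)

variable {E F : Type*} [NormedAddCommGroup E] [NormedSpace ℝ E]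
  [NormedAddCommGroup F] [InnerProductSpace ℝ F]

lemma norm_mul_norm_mul_norm_normalize_sub_sq {u v : F} (hu : u ≠ 0) (hv : v ≠ 0) :
    ‖u‖ * ‖v‖ * ‖normalize u - normalize v‖ ^ 2 = 2 * (‖u‖ * ‖v‖) - 2 * ⟪u, v⟫ := by
  have hu' : ‖u‖ ≠ 0 := norm_ne_zero_iff.mpr hu
  have hv' : ‖v‖ ≠ 0 := norm_ne_zero_iff.mpr hv
  rw [norm_sub_sq_real, NormedSpace.norm_normalize hu, NormedSpace.norm_normalize hv,
    NormedSpace.normalize, NormedSpace.normalize, real_inner_smul_left, real_inner_smul_right]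
  field_simp
  ring

lemma norm_normalize_sub_normalize_le {u v : F} {G : ℝ} (hG : 0 < G) (hu : G ≤ ‖u‖)
    (hv : G ≤ ‖v‖) : ‖normalize u - normalize v‖ ≤ ‖u - v‖ / G := by
  have hu0 : u ≠ 0 := norm_pos_iff.mp (hG.trans_le hu)
  have hv0 : v ≠ 0 := norm_pos_iff.mp (hG.trans_le hv)
  -- `‖u - v‖² = ‖u‖‖v‖‖û - v̂‖² + (‖u‖ - ‖v‖)²`
  have key : ‖u‖ * ‖v‖ * ‖normalize u - normalize v‖ ^ 2 ≤ ‖u - v‖ ^ 2 := by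
    rw [norm_mul_norm_mul_norm_normalize_sub_sq hu0 hv0, norm_sub_sq_real]
    nlinarith [sq_nonneg (‖u‖ - ‖v‖)]
  rw [le_div_iff₀ hG, ← pow_le_pow_iff_left₀ (by positivity) (norm_nonneg _) two_ne_zero]
  calc (‖normalize u - normalize v‖ * G) ^ 2
      = G * G * ‖normalize u - normalize v‖ ^ 2 := by ring
    _ ≤ ‖u‖ * ‖v‖ * ‖normalize u - normalize v‖ ^ 2 := by gcongr
    _ ≤ ‖u - v‖ ^ 2 := key

/-- `I - h hᵀ`: for a unit vector `h`, the orthogonal projection onto `hᗮ`. -/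
noncomputable def tangentProj (h : F) : F →L[ℝ] F :=
  ContinuousLinearMap.id ℝ F - (innerSL ℝ h).smulRight h

lemma tangentProj_apply (h z : F) : tangentProj h z = z - ⟪h, z⟫ • h := rfl

lemma norm_tangentProj_le {h : F} (hh : ‖h‖ = 1) : ‖tangentProj h‖ ≤ 1 := by
  refine ContinuousLinearMap.opNorm_le_bound _ zero_le_one fun z => ?_
  rw [one_mul, tangentProj_apply, ← pow_le_pow_iff_left₀ (norm_nonneg _) (norm_nonneg _)
    two_ne_zero, norm_sub_sq_real, real_inner_smul_right, norm_smul, hh, mul_one,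
    real_inner_comm, Real.norm_eq_abs, sq_abs]
  nlinarith [sq_nonneg ⟪z, h⟫]

lemma norm_tangentProj_sub_le {a b : F} (ha : ‖a‖ = 1) (hb : ‖b‖ = 1) :
    ‖tangentProj a - tangentProj b‖ ≤ 2 * ‖a - b‖ := by
  refine ContinuousLinearMap.opNorm_le_bound _ (by positivity) fun z => ?_
  have hsplit : tangentProj a z - tangentProj b z = ⟪b - a, z⟫ • b + ⟪a, z⟫ • (b - a) := by
    simp only [tangentProj_apply, inner_sub_left, sub_smul, smul_sub]
    abel
  calc ‖(tangentProj a - tangentProj b) z‖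
      ≤ ‖b - a‖ * ‖z‖ * ‖b‖ + ‖a‖ * ‖z‖ * ‖b - a‖ := by
        rw [sub_apply, hsplit]
        refine (norm_add_le _ _).trans (add_le_add ?_ ?_) <;> rw [norm_smul] <;> gcongr <;>
          exact norm_inner_le_norm _ _
    _ = 2 * ‖a - b‖ * ‖z‖ := by rw [ha, hb, norm_sub_rev]; ring

lemma HasFDerivAt.norm_of_ne_zero {g : E → F} {g' : E →L[ℝ] F} {θ : E}
    (hg : HasFDerivAt g g' θ) (h0 : g θ ≠ 0) :
    HasFDerivAt (fun t => ‖g t‖) (‖g θ‖⁻¹ • (innerSL ℝ (g θ)).comp g') θ := by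
  have hsqrt := hg.norm_sq.sqrt (pow_ne_zero 2 (norm_ne_zero_iff.mpr h0))
  simp only [Real.sqrt_sq (norm_nonneg _)] at hsqrt
  convert hsqrt using 1
  ext w
  simp only [smul_apply, ContinuousLinearMap.comp_apply, coe_innerSL_apply, smul_eq_mul, one_div,
    mul_inv_rev, two_smul, smul_add, add_apply]
  ring

lemma HasFDerivAt.normalize {g : E → F} {g' : E →L[ℝ] F} {θ : E}
    (hg : HasFDerivAt g g' θ) (h0 : g θ ≠ 0) :
    HasFDerivAt (fun t => normalize (g t))
      (‖g θ‖⁻¹ • (tangentProj (normalize (g θ))).comp g') θ := by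
  have hn : ‖g θ‖ ≠ 0 := norm_ne_zero_iff.mpr h0
  have hinv : HasFDerivAt (fun t => ‖g t‖⁻¹)
      (-(‖g θ‖ ^ 2)⁻¹ • ‖g θ‖⁻¹ • (innerSL ℝ (g θ)).comp g') θ :=
    (hasDerivAt_inv hn).comp_hasFDerivAt θ (hg.norm_of_ne_zero h0)
  refine (hinv.smul hg).congr_fderiv ?_
  ext w
  simp only [smul_smul, neg_mul, neg_smul, add_apply, smul_apply, neg_apply,
    ContinuousLinearMap.smulRight_apply, ContinuousLinearMap.comp_apply, coe_innerSL_apply,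
    smul_eq_mul, NormedSpace.normalize, tangentProj_apply, real_inner_smul_left]
  match_scalars <;> field_simp

lemma norm_smul_comp_sub_smul_comp_le {a b : ℝ} {P Q : F →L[ℝ] F} {A B : E →L[ℝ] F} :
    ‖a • P.comp A - b • Q.comp B‖
      ≤ |a - b| * ‖P‖ * ‖A‖ + |b| * ‖P - Q‖ * ‖A‖ + |b| * ‖Q‖ * ‖A - B‖ := by
  have hsplit : a • P.comp A - b • Q.comp B
      = (a - b) • P.comp A + b • (P - Q).comp A + b • Q.comp (A - B) := by
    simp only [ContinuousLinearMap.sub_comp, ContinuousLinearMap.comp_sub, sub_smul, smul_sub]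
    abel
  rw [hsplit]
  refine norm_add₃_le.trans (add_le_add_three ?_ ?_ ?_) <;>
    rw [norm_smul, Real.norm_eq_abs, mul_assoc] <;>
    gcongr <;> exact ContinuousLinearMap.opNorm_comp_le _ _

theorem norm_fderiv_normalize_sub_le {g : E → F} (hg : Differentiable ℝ g) {G L ρ : ℝ}
    (hG : 0 < G) (hgG : ∀ θ, G ≤ ‖g θ‖) (hL : ∀ θ, ‖fderiv ℝ g θ‖ ≤ L)
    (hρ : ∀ x y, ‖fderiv ℝ g x - fderiv ℝ g y‖ ≤ ρ * ‖x - y‖) (x y : E) :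
    ‖fderiv ℝ (fun θ => normalize (g θ)) x - fderiv ℝ (fun θ => normalize (g θ)) y‖
      ≤ (3 * L ^ 2 + ρ * G) / G ^ 2 * ‖x - y‖ := by
  have hg0 θ : g θ ≠ 0 := norm_pos_iff.mp (hG.trans_le (hgG θ))
  have hunit θ : ‖normalize (g θ)‖ = 1 := NormedSpace.norm_normalize (hg0 θ)
  have hL0 : 0 ≤ L := (norm_nonneg _).trans (hL x)
  have hgLip : ‖g x - g y‖ ≤ L * ‖x - y‖ :=
    convex_univ.norm_image_sub_le_of_norm_fderiv_le (fun θ _ => hg θ) (fun θ _ => hL θ)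
      trivial trivial
  have hscale : |‖g x‖⁻¹ - ‖g y‖⁻¹| ≤ L * ‖x - y‖ / G ^ 2 :=
    (abs_inv_norm_sub_inv_norm_le hG (hgG x) (hgG y)).trans (by gcongr)
  have hproj : ‖tangentProj (normalize (g x)) - tangentProj (normalize (g y))‖
      ≤ 2 * (L * ‖x - y‖ / G) :=
    (norm_tangentProj_sub_le (hunit x) (hunit y)).trans <| by
      gcongr
      exact (norm_normalize_sub_normalize_le hG (hgG x) (hgG y)).trans (by gcongr)
  have hinv : |‖g y‖⁻¹| ≤ G⁻¹ := by
    rw [abs_inv, abs_norm]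
    exact inv_anti₀ hG (hgG y)
  rw [((hg x).hasFDerivAt.normalize (hg0 x)).fderiv,
    ((hg y).hasFDerivAt.normalize (hg0 y)).fderiv]
  calc _ ≤ _ := norm_smul_comp_sub_smul_comp_le
    _ ≤ L * ‖x - y‖ / G ^ 2 * 1 * L + G⁻¹ * (2 * (L * ‖x - y‖ / G)) * L
        + G⁻¹ * 1 * (ρ * ‖x - y‖) := by
      gcongr
      exacts [norm_tangentProj_le (hunit x), hL x, hL x, norm_tangentProj_le (hunit y), hρ x y]
    _ = (3 * L ^ 2 + ρ * G) / G ^ 2 * ‖x - y‖ := by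
      field_simp
      ring

lemma ContDiff.differentiable_gradient {H : Type*} [NormedAddCommGroup H] [InnerProductSpace ℝ H]
    [CompleteSpace H] {f : H → ℝ} (hf : ContDiff ℝ 2 f) : Differentiable ℝ (gradient f) :=
  (InnerProductSpace.toDual ℝ H).symm.differentiable.comp
    ((hf.fderiv_right (m := 1) (by norm_num)).differentiable one_ne_zero)

theorem normalized_gradient_jacobian_lipschitz_general {d : ℕ}
    (f : EuclideanSpace ℝ (Fin d) → ℝ) (hf : ContDiff ℝ 3 f)
    (Gmin L ρ : ℝ) (hGmin : 0 < Gmin)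
    (hgrad : ∀ θ : EuclideanSpace ℝ (Fin d), Gmin ≤ ‖gradient f θ‖)
    (hHess : ∀ θ : EuclideanSpace ℝ (Fin d), ‖fderiv ℝ (gradient f) θ‖ ≤ L)
    (hHessLip : ∀ x y : EuclideanSpace ℝ (Fin d),
      ‖fderiv ℝ (gradient f) x - fderiv ℝ (gradient f) y‖ ≤ ρ * ‖x - y‖) :
    ∀ x y : EuclideanSpace ℝ (Fin d),
      ‖fderiv ℝ (fun θ => ‖gradient f θ‖⁻¹ • gradient f θ) x
          - fderiv ℝ (fun θ => ‖gradient f θ‖⁻¹ • gradient f θ) y‖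
        ≤ ((3 * L ^ 2 + ρ * Gmin) / Gmin ^ 2) * ‖x - y‖ :=
  norm_fderiv_normalize_sub_le ((hf.of_le (by norm_num)).differentiable_gradient) hGmin hgrad
    hHess hHessLip

/-- **Lipschitz constant of the Jacobian of the normalized gradient.** If `f` is C³ with
`‖∇f‖ ≥ G_min > 0`, `‖∇²f‖ ≤ L`, and `ρ`-Lipschitz Hessian, then the derivative `J` of
the normalized gradient map `θ ↦ ∇f(θ)/‖∇f(θ)‖` is Lipschitz in operator norm with
constant `(3L² + ρ G_min)/G_min²`. -/
theorem normalized_gradient_jacobian_lipschitz {d : ℕ}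
    (f : EuclideanSpace ℝ (Fin d) → ℝ) (hf : ContDiff ℝ 3 f)
    (Gmin L ρ : ℝ) (hGmin : 0 < Gmin) (hL : 0 < L) (hρ : 0 < ρ)
    (hgrad : ∀ θ : EuclideanSpace ℝ (Fin d), Gmin ≤ ‖gradient f θ‖)
    (hHess : ∀ θ : EuclideanSpace ℝ (Fin d), ‖fderiv ℝ (gradient f) θ‖ ≤ L)
    (hHessLip : ∀ x y : EuclideanSpace ℝ (Fin d),
      ‖fderiv ℝ (gradient f) x - fderiv ℝ (gradient f) y‖ ≤ ρ * ‖x - y‖) :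
    ∀ x y : EuclideanSpace ℝ (Fin d),
      ‖fderiv ℝ (fun θ => ‖gradient f θ‖⁻¹ • gradient f θ) x
          - fderiv ℝ (fun θ => ‖gradient f θ‖⁻¹ • gradient f θ) y‖
        ≤ ((3 * L ^ 2 + ρ * Gmin) / Gmin ^ 2) * ‖x - y‖ :=
  normalized_gradient_jacobian_lipschitz_general f hf Gmin L ρ hGmin hgrad hHess hHessLip
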